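/- arXiv:1906.03603 — 3 statements merged into one kernel-verified Lean document; each statement's English description precedes it below -/
import Mathlib

section
/- Let Σ, G be n×n real matrices with G symmetric, Σ symmetric positive semidefinite, and I + GΣ invertible. Let F ∈ ℝ^{k×n}, φ ∈ ℝⁿ, b ∈ ℝᵏ. Suppose ξ ∈ ℝⁿ satisfies F Σ ξ = F φ + b. Then λ := (I + GΣ)ξ − Gφ satisfies F Σ (I + GΣ)⁻¹ λ = F (I + ΣG)⁻¹ φ + b. -/
open Matrix

theorem optimal_parameter_construction (k n : ℕ)
    (S G : Matrix (Fin n) (Fin n) ℝ)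
    (hG : G.IsSymm) (hS : S.PosSemidef)
    (hinv : IsUnit (1 + G * S))
    (F : Matrix (Fin k) (Fin n) ℝ) (φ : Fin n → ℝ) (b : Fin k → ℝ)
    (ξ : Fin n → ℝ)
    (hξ : F.mulVec (S.mulVec ξ) = F.mulVec φ + b) :
    (F * S * (1 + G * S)⁻¹).mulVec ((1 + G * S).mulVec ξ - G.mulVec φ) =
      (F * (1 + S * G)⁻¹).mulVec φ + b := by
  have hd : IsUnit (1 + G * S).det := (Matrix.isUnit_iff_isUnit_det _).mp hinv
  have hd2 : IsUnit (1 + S * G).det := by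
    rwa [Matrix.det_one_add_mul_comm]
  have key : S * (1 + G * S)⁻¹ = (1 + S * G)⁻¹ * S := by
    have h1 : (1 + S * G) * S = S * (1 + G * S) := by
      simp [Matrix.mul_add, Matrix.add_mul, Matrix.mul_assoc]
    calc S * (1 + G * S)⁻¹
        = (1 + S * G)⁻¹ * ((1 + S * G) * S * (1 + G * S)⁻¹) := by
          rw [← Matrix.mul_assoc, ← Matrix.mul_assoc, Matrix.nonsing_inv_mul _ hd2,
            Matrix.one_mul]
      _ = (1 + S * G)⁻¹ * S := by
          rw [h1, Matrix.mul_assoc, Matrix.mul_nonsing_inv _ hd, Matrix.mul_one]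
  have key2 : S * (1 + G * S)⁻¹ * G = 1 - (1 + S * G)⁻¹ := by
    rw [key, Matrix.mul_assoc]
    have : (1 + S * G)⁻¹ * (S * G) = (1 + S * G)⁻¹ * (1 + S * G) - (1 + S * G)⁻¹ := by
      rw [Matrix.mul_add, Matrix.mul_one]; abel
    rw [this, Matrix.nonsing_inv_mul _ hd2]
  rw [Matrix.mulVec_sub]
  have h3 : (F * S * (1 + G * S)⁻¹) * (1 + G * S) = F * S := by
    rw [Matrix.mul_assoc, Matrix.nonsing_inv_mul _ hd, Matrix.mul_one]
  rw [Matrix.mulVec_mulVec, h3, Matrix.mulVec_mulVec]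
  have h4 : F * S * (1 + G * S)⁻¹ * G = F - F * (1 + S * G)⁻¹ := by
    rw [Matrix.mul_assoc F S, Matrix.mul_assoc F, key2, Matrix.mul_sub, Matrix.mul_one]
  rw [h4, ← Matrix.mulVec_mulVec _ F S, hξ, Matrix.sub_mulVec]
  abel
end

section
/- Let A, K : [0,T] → ℝ^{n×n} be bounded measurable, Q, R : [0,T] → ℝ^{n×n} bounded measurable symmetric positive semidefinite, N : [0,T] → ℝ^{(m−n)×(m−n)} bounded measurable with N(s) ≥ δI for some δ > 0, and L : [0,T] → ℝ^{n×(m−n)} bounded measurable. Then the Riccati differential equation Σ̇ − ΣAᵀ − AΣ − ΣQΣ + LN⁻¹Lᵀ + K(I+ΣR)⁻¹ΣKᵀ = 0 on [0,T] with terminal condition Σ(T) = 0 has at most one continuous symmetric positive semidefinite solution on [0,T]. -/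
open Matrix

attribute [local instance] Matrix.normedAddCommGroup Matrix.normedSpace



namespace RiccatiAux

lemma abs_dot_le {q : ℕ} (x y : Fin q → ℝ) :
    |x ⬝ᵥ y| ≤ Real.sqrt (x ⬝ᵥ x) * Real.sqrt (y ⬝ᵥ y) := by
  have h := Finset.sum_mul_sq_le_sq_mul_sq Finset.univ x y
  have hx : x ⬝ᵥ x = ∑ i, x i ^ 2 := by simp [dotProduct, sq]
  have hy : y ⬝ᵥ y = ∑ i, y i ^ 2 := by simp [dotProduct, sq]
  have hd : x ⬝ᵥ y = ∑ i, x i * y i := rfl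
  have h0x : (0:ℝ) ≤ x ⬝ᵥ x := by rw [hx]; positivity
  have : |x ⬝ᵥ y| = Real.sqrt ((x ⬝ᵥ y)^2) := (Real.sqrt_sq_eq_abs _).symm
  rw [this, ← Real.sqrt_mul h0x]
  apply Real.sqrt_le_sqrt
  rw [hx, hy, hd]; exact h

lemma dot_self_nonneg {q : ℕ} (x : Fin q → ℝ) : (0:ℝ) ≤ x ⬝ᵥ x := by
  have : x ⬝ᵥ x = ∑ i, x i ^ 2 := by simp [dotProduct, sq]
  rw [this]; positivity

lemma en_le_en_mulVec {q : ℕ} {G : Matrix (Fin q) (Fin q) ℝ} (hG : G.PosSemidef)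
    (x : Fin q → ℝ) :
    Real.sqrt (x ⬝ᵥ x) ≤ Real.sqrt (((1 + G) *ᵥ x) ⬝ᵥ ((1 + G) *ᵥ x)) := by
  set y := (1 + G) *ᵥ x with hy
  have hGx : (0:ℝ) ≤ x ⬝ᵥ (G *ᵥ x) := by simpa using hG.dotProduct_mulVec_nonneg x
  have h1 : x ⬝ᵥ x ≤ x ⬝ᵥ y := by
    rw [hy, add_mulVec, one_mulVec, dotProduct_add]
    linarith
  have h2 : x ⬝ᵥ y ≤ Real.sqrt (x ⬝ᵥ x) * Real.sqrt (y ⬝ᵥ y) :=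
    le_trans (le_abs_self _) (abs_dot_le x y)
  have h3 : Real.sqrt (x ⬝ᵥ x) ^ 2 ≤ Real.sqrt (x ⬝ᵥ x) * Real.sqrt (y ⬝ᵥ y) := by
    rw [sq, Real.mul_self_sqrt (dot_self_nonneg x)]
    exact le_trans h1 h2
  rcases eq_or_lt_of_le (Real.sqrt_nonneg (x ⬝ᵥ x)) with h | h
  · rw [← h]; exact Real.sqrt_nonneg _
  · nlinarith

/-- Entrywise sup norm of a matrix product. -/
lemma norm_matmul {l m o : ℕ} (A : Matrix (Fin l) (Fin m) ℝ) (B : Matrix (Fin m) (Fin o) ℝ) :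
    ‖A * B‖ ≤ m * ‖A‖ * ‖B‖ := by
  have h0 : (0:ℝ) ≤ m * ‖A‖ * ‖B‖ := by positivity
  rw [Matrix.norm_le_iff h0]
  intro i j
  have : (A * B) i j = ∑ k, A i k * B k j := rfl
  rw [Real.norm_eq_abs, this]
  calc |∑ k, A i k * B k j| ≤ ∑ k, |A i k * B k j| := Finset.abs_sum_le_sum_abs _ _
    _ ≤ ∑ _k : Fin m, ‖A‖ * ‖B‖ := by
        apply Finset.sum_le_sum
        intro k _
        rw [abs_mul]
        have h1 : |A i k| ≤ ‖A‖ := A.norm_entry_le_entrywise_sup_norm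
        have h2 : |B k j| ≤ ‖B‖ := B.norm_entry_le_entrywise_sup_norm
        exact mul_le_mul h1 h2 (abs_nonneg _) (norm_nonneg _)
    _ = m * ‖A‖ * ‖B‖ := by simp [mul_assoc]

lemma mul_norm_le {l m o : ℕ} {A : Matrix (Fin l) (Fin m) ℝ} {B : Matrix (Fin m) (Fin o) ℝ}
    {a b : ℝ} (h1 : ‖A‖ ≤ a) (h2 : ‖B‖ ≤ b) (hb : 0 ≤ b) :
    ‖A * B‖ ≤ m * a * b := by
  refine (norm_matmul A B).trans ?_
  have := norm_nonneg A; have := norm_nonneg B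
  have ha : 0 ≤ a := le_trans (norm_nonneg A) h1
  have hm : (0:ℝ) ≤ m := Nat.cast_nonneg m
  nlinarith [mul_le_mul h1 h2 (norm_nonneg B) ha]


lemma ring_id_right {α : Type*} [Ring α] (W R P Pi : α) (hP : P = 1 + W * R * W)
    (h1 : P * Pi = 1) : (1 + W * W * R) * (1 - W * Pi * (W * R)) = 1 := by
  calc (1 + W * W * R) * (1 - W * Pi * (W * R))
      = 1 + W * W * R - W * ((1 + W * R * W) * Pi) * (W * R) := by noncomm_ring
    _ = 1 + W * W * R - W * (P * Pi) * (W * R) := by rw [hP]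
    _ = 1 := by rw [h1]; noncomm_ring

lemma ring_id_left {α : Type*} [Ring α] (W R P Pi : α) (hP : P = 1 + W * R * W)
    (h2 : Pi * P = 1) : (1 - W * Pi * (W * R)) * (1 + W * W * R) = 1 := by
  calc (1 - W * Pi * (W * R)) * (1 + W * W * R)
      = 1 + W * W * R - W * (Pi * (1 + W * R * W)) * (W * R) := by noncomm_ring
    _ = 1 + W * W * R - W * (Pi * P) * (W * R) := by rw [hP]
    _ = 1 := by rw [h2]; noncomm_ring

set_option maxHeartbeats 1000000 in
lemma inv_bound {n : ℕ} {S R : Matrix (Fin n) (Fin n) ℝ} (hS : S.PosSemidef)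
    (hR : R.PosSemidef) :
    (1 + S * R) * (1 + S * R)⁻¹ = 1 ∧ (1 + S * R)⁻¹ * (1 + S * R) = 1 ∧
      ‖(1 + S * R)⁻¹‖ ≤ 1 + n * ‖S‖ * ‖R‖ := by
  obtain ⟨W, hW, hWH, hWW⟩ : ∃ W : Matrix (Fin n) (Fin n) ℝ,
      W.PosSemidef ∧ Wᴴ = W ∧ W * W = S :=
    by
      open scoped MatrixOrder in
      exact ⟨CFC.sqrt S, (CFC.sqrt_nonneg S).posSemidef, (CFC.sqrt_nonneg S).posSemidef.1,
        CFC.sqrt_mul_sqrt_self S hS.nonneg⟩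
  have hWRW : (W * R * W).PosSemidef := by
    have := hR.mul_mul_conjTranspose_same W
    rwa [hWH] at this
  have hP : (1 + W * R * W).PosDef := Matrix.PosDef.one.add_posSemidef hWRW
  obtain ⟨Pi, h1, h2⟩ : ∃ Pi : Matrix (Fin n) (Fin n) ℝ,
      (1 + W * R * W) * Pi = 1 ∧ Pi * (1 + W * R * W) = 1 := by
    have hPdet : IsUnit (1 + W * R * W).det :=
      (Matrix.isUnit_iff_isUnit_det _).mp hP.isUnit
    exact ⟨(1 + W * R * W)⁻¹, Matrix.mul_nonsing_inv _ hPdet, Matrix.nonsing_inv_mul _ hPdet⟩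
  have hSR : 1 + S * R = 1 + W * W * R := by rw [hWW]
  have hright : (1 + S * R) * (1 - W * Pi * (W * R)) = 1 := by
    rw [hSR]; exact ring_id_right W R _ Pi rfl h1
  have hleft : (1 - W * Pi * (W * R)) * (1 + S * R) = 1 := by
    rw [hSR]; exact ring_id_left W R _ Pi rfl h2
  have hinv : (1 + S * R)⁻¹ = 1 - W * Pi * (W * R) := Matrix.inv_eq_right_inv hright
  refine ⟨by rw [hinv]; exact hright, by rw [hinv]; exact hleft, ?_⟩
  rw [hinv]
  -- entrywise bound on W * Pi * W
  have hdiag : ∀ i, W i ⬝ᵥ W i = S i i := by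
    intro i
    have : (W * W) i i = S i i := by rw [hWW]
    rw [← this, Matrix.mul_apply, dotProduct]
    congr 1; ext k
    have : W k i = W i k := by
      have := congrFun (congrFun hWH i) k
      simpa [Matrix.conjTranspose_apply] using this
    rw [this]
  have hcol : ∀ j, (fun l => W l j) ⬝ᵥ (fun l => W l j) = S j j := by
    intro j
    have hsymm : ∀ k l, W k l = W l k := by
      intro k l
      have := congrFun (congrFun hWH l) k
      simpa [Matrix.conjTranspose_apply] using this
    have : (fun l => W l j) ⬝ᵥ (fun l => W l j) = W j ⬝ᵥ W j := by
      simp only [dotProduct]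
      congr 1; ext l
      rw [hsymm l j]
    rw [this, hdiag]
  have hentry : ∀ i j, |(W * Pi * W) i j| ≤ ‖S‖ := by
    intro i j
    have hrepr : (W * Pi * W) i j = W i ⬝ᵥ (Pi *ᵥ (fun l => W l j)) := by
      simp only [Matrix.mul_apply, mulVec, dotProduct, Finset.mul_sum, Finset.sum_mul]
      rw [Finset.sum_comm]
      congr 1; ext l; congr 1; ext k; ring
    rw [hrepr]
    have hCS := abs_dot_le (W i) (Pi *ᵥ (fun l => W l j))
    have hPib : Real.sqrt ((Pi *ᵥ fun l => W l j) ⬝ᵥ (Pi *ᵥ fun l => W l j))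
        ≤ Real.sqrt (S j j) := by
      have := en_le_en_mulVec hWRW (Pi *ᵥ (fun l => W l j))
      rw [Matrix.mulVec_mulVec, h1, Matrix.one_mulVec, hcol j] at this
      exact this
    have hWi : Real.sqrt (W i ⬝ᵥ W i) = Real.sqrt (S i i) := by rw [hdiag]
    have hSii : Real.sqrt (S i i) ≤ Real.sqrt ‖S‖ :=
      Real.sqrt_le_sqrt (le_trans (le_abs_self _) (S.norm_entry_le_entrywise_sup_norm))
    have hSjj : Real.sqrt (S j j) ≤ Real.sqrt ‖S‖ :=
      Real.sqrt_le_sqrt (le_trans (le_abs_self _) (S.norm_entry_le_entrywise_sup_norm))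
    calc |W i ⬝ᵥ (Pi *ᵥ fun l => W l j)|
        ≤ Real.sqrt (W i ⬝ᵥ W i) *
            Real.sqrt ((Pi *ᵥ fun l => W l j) ⬝ᵥ (Pi *ᵥ fun l => W l j)) := hCS
      _ ≤ Real.sqrt ‖S‖ * Real.sqrt ‖S‖ := by
          rw [hWi]
          exact mul_le_mul hSii (hPib.trans hSjj) (Real.sqrt_nonneg _) (Real.sqrt_nonneg _)
      _ = ‖S‖ := Real.mul_self_sqrt (norm_nonneg S)
  have hWPiW : ‖W * Pi * W‖ ≤ ‖S‖ := by
    rw [Matrix.norm_le_iff (norm_nonneg S)]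
    intro i j
    exact hentry i j
  have hassoc : W * Pi * (W * R) = (W * Pi * W) * R := by noncomm_ring
  have hone : ‖(1 : Matrix (Fin n) (Fin n) ℝ)‖ ≤ 1 := by
    rw [Matrix.norm_le_iff zero_le_one]
    intro i j
    rcases eq_or_ne i j with h | h <;> simp [Matrix.one_apply, h]
  calc ‖1 - W * Pi * (W * R)‖ ≤ ‖(1 : Matrix (Fin n) (Fin n) ℝ)‖ + ‖W * Pi * (W * R)‖ :=
        norm_sub_le _ _
    _ ≤ 1 + n * ‖S‖ * ‖R‖ := by
        rw [hassoc]
        have := mul_norm_le (A := W * Pi * W) (B := R) hWPiW (le_refl ‖R‖) (norm_nonneg R)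
        linarith


lemma riccati_deriv_diff_id {α : Type*} [Ring α] (S₁ S₂ At Aa Q R L Kk Kt M₁ M₂ : α)
    (h₁ : M₁ * (1 + S₁ * R) = 1) (h₂ : (1 + S₂ * R) * M₂ = 1) :
    (S₁ * At + Aa * S₁ + S₁ * Q * S₁ - L - Kk * M₁ * S₁ * Kt) -
      (S₂ * At + Aa * S₂ + S₂ * Q * S₂ - L - Kk * M₂ * S₂ * Kt)
    = (S₁ - S₂) * At + Aa * (S₁ - S₂) + ((S₁ - S₂) * Q * S₁ + S₂ * Q * (S₁ - S₂))
      - Kk * (M₁ * (S₁ - S₂) - M₁ * (S₁ - S₂) * R * (M₂ * S₂)) * Kt := by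
  have e1 : M₁ * (S₁ * R) * M₂ = M₂ - M₁ * M₂ := by
    calc M₁ * (S₁ * R) * M₂ = (M₁ * (1 + S₁ * R) - M₁) * M₂ := by noncomm_ring
      _ = (1 - M₁) * M₂ := by rw [h₁]
      _ = M₂ - M₁ * M₂ := by noncomm_ring
  have e2 : M₁ * (S₂ * R) * M₂ = M₁ - M₁ * M₂ := by
    calc M₁ * (S₂ * R) * M₂ = M₁ * ((1 + S₂ * R) * M₂ - M₂) := by noncomm_ring
      _ = M₁ * (1 - M₂) := by rw [h₂]
      _ = M₁ - M₁ * M₂ := by noncomm_ring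
  have key : M₁ * S₁ - M₂ * S₂
      = M₁ * (S₁ - S₂) - M₁ * (S₁ - S₂) * R * (M₂ * S₂) := by
    calc M₁ * S₁ - M₂ * S₂
        = M₁ * S₁ - M₁ * S₂ - (M₂ - M₁ * M₂) * S₂ + (M₁ - M₁ * M₂) * S₂ := by noncomm_ring
      _ = M₁ * S₁ - M₁ * S₂ - (M₁ * (S₁ * R) * M₂) * S₂ + (M₁ * (S₂ * R) * M₂) * S₂ := by
          rw [e1, e2]
      _ = M₁ * (S₁ - S₂) - M₁ * (S₁ - S₂) * R * (M₂ * S₂) := by noncomm_ring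
  have key2 : Kk * M₁ * S₁ * Kt - Kk * M₂ * S₂ * Kt
      = Kk * (M₁ * (S₁ - S₂) - M₁ * (S₁ - S₂) * R * (M₂ * S₂)) * Kt := by
    calc Kk * M₁ * S₁ * Kt - Kk * M₂ * S₂ * Kt
        = Kk * (M₁ * S₁ - M₂ * S₂) * Kt := by noncomm_ring
      _ = _ := by rw [key]
  rw [← key2]; noncomm_ring

lemma norm_of_entries {k l : ℕ} {T : ℝ} {M : ℝ → Matrix (Fin k) (Fin l) ℝ} {c : ℝ}
    (h : ∀ s ∈ Set.Icc 0 T, ∀ i j, |M s i j| ≤ c) :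
    ∀ s ∈ Set.Icc (0:ℝ) T, ‖M s‖ ≤ max c 0 := fun s hs =>
  (Matrix.norm_le_iff (le_max_right _ _)).mpr fun i j =>
    le_trans (le_of_eq (Real.norm_eq_abs _)) (le_trans (h s hs i j) (le_max_left _ _))

end RiccatiAux

open RiccatiAux

set_option maxHeartbeats 1000000

theorem riccati_uniqueness (n : ℕ) (T : ℝ) (hT : 0 < T)
    (A K Q R : ℝ → Matrix (Fin n) (Fin n) ℝ)
    (p : ℕ) (N : ℝ → Matrix (Fin p) (Fin p) ℝ) (L' : ℝ → Matrix (Fin n) (Fin p) ℝ)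
    (hAm : ∀ i j, Measurable fun s => A s i j)
    (hKm : ∀ i j, Measurable fun s => K s i j)
    (hQm : ∀ i j, Measurable fun s => Q s i j)
    (hRm : ∀ i j, Measurable fun s => R s i j)
    (hNm : ∀ i j, Measurable fun s => N s i j)
    (hLm : ∀ i j, Measurable fun s => L' s i j)
    (hAb : ∃ c, ∀ s ∈ Set.Icc 0 T, ∀ i j, |A s i j| ≤ c)
    (hKb : ∃ c, ∀ s ∈ Set.Icc 0 T, ∀ i j, |K s i j| ≤ c)
    (hQb : ∃ c, ∀ s ∈ Set.Icc 0 T, ∀ i j, |Q s i j| ≤ c)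
    (hRb : ∃ c, ∀ s ∈ Set.Icc 0 T, ∀ i j, |R s i j| ≤ c)
    (hNb : ∃ c, ∀ s ∈ Set.Icc 0 T, ∀ i j, |N s i j| ≤ c)
    (hLb : ∃ c, ∀ s ∈ Set.Icc 0 T, ∀ i j, |L' s i j| ≤ c)
    (hQ : ∀ s ∈ Set.Icc 0 T, (Q s).PosSemidef)
    (hR : ∀ s ∈ Set.Icc 0 T, (R s).PosSemidef)
    (δ : ℝ) (hδ : 0 < δ)
    (hN : ∀ s ∈ Set.Icc 0 T, (N s - δ • (1 : Matrix (Fin p) (Fin p) ℝ)).PosSemidef)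
    (S₁ S₂ : ℝ → Matrix (Fin n) (Fin n) ℝ)
    (hcont₁ : ContinuousOn S₁ (Set.Icc 0 T))
    (hcont₂ : ContinuousOn S₂ (Set.Icc 0 T))
    (hpsd₁ : ∀ s ∈ Set.Icc 0 T, (S₁ s).PosSemidef)
    (hpsd₂ : ∀ s ∈ Set.Icc 0 T, (S₂ s).PosSemidef)
    (hT₁ : S₁ T = 0) (hT₂ : S₂ T = 0)
    (hode₁ : ∀ s ∈ Set.Icc 0 T, HasDerivWithinAt S₁
      (S₁ s * (A s)ᵀ + A s * S₁ s + S₁ s * Q s * S₁ s - L' s * (N s)⁻¹ * (L' s)ᵀ -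
        K s * (1 + S₁ s * R s)⁻¹ * S₁ s * (K s)ᵀ) (Set.Icc 0 T) s)
    (hode₂ : ∀ s ∈ Set.Icc 0 T, HasDerivWithinAt S₂
      (S₂ s * (A s)ᵀ + A s * S₂ s + S₂ s * Q s * S₂ s - L' s * (N s)⁻¹ * (L' s)ᵀ -
        K s * (1 + S₂ s * R s)⁻¹ * S₂ s * (K s)ᵀ) (Set.Icc 0 T) s) :
    ∀ s ∈ Set.Icc 0 T, S₁ s = S₂ s := by
  classical
  obtain ⟨cA', hA'⟩ := hAb
  obtain ⟨cK', hK'⟩ := hKb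
  obtain ⟨cQ', hQ'⟩ := hQb
  obtain ⟨cR', hR'⟩ := hRb
  set cA := max cA' 0 with hcAdef
  set cK := max cK' 0 with hcKdef
  set cQ := max cQ' 0 with hcQdef
  set cR := max cR' 0 with hcRdef
  have hcA : ∀ s ∈ Set.Icc (0:ℝ) T, ‖A s‖ ≤ cA := norm_of_entries hA'
  have hcK : ∀ s ∈ Set.Icc (0:ℝ) T, ‖K s‖ ≤ cK := norm_of_entries hK'
  have hcQ : ∀ s ∈ Set.Icc (0:ℝ) T, ‖Q s‖ ≤ cQ := norm_of_entries hQ'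
  have hcR : ∀ s ∈ Set.Icc (0:ℝ) T, ‖R s‖ ≤ cR := norm_of_entries hR'
  have hcAt : ∀ s ∈ Set.Icc (0:ℝ) T, ‖(A s)ᵀ‖ ≤ cA :=
    norm_of_entries (M := fun s => (A s)ᵀ) (fun s hs i j => hA' s hs j i)
  have hcKt : ∀ s ∈ Set.Icc (0:ℝ) T, ‖(K s)ᵀ‖ ≤ cK :=
    norm_of_entries (M := fun s => (K s)ᵀ) (fun s hs i j => hK' s hs j i)
  have hcA0 : 0 ≤ cA := le_max_right _ _
  have hcK0 : 0 ≤ cK := le_max_right _ _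
  have hcQ0 : 0 ≤ cQ := le_max_right _ _
  have hcR0 : 0 ≤ cR := le_max_right _ _
  obtain ⟨c₁, hc₁⟩ := isCompact_Icc.exists_bound_of_continuousOn hcont₁
  obtain ⟨c₂, hc₂⟩ := isCompact_Icc.exists_bound_of_continuousOn hcont₂
  set cS := max c₁ (max c₂ 0) with hcSdef
  have hcS0 : 0 ≤ cS := le_trans (le_max_right _ _) (le_max_right _ _)
  have hS₁b : ∀ s ∈ Set.Icc (0:ℝ) T, ‖S₁ s‖ ≤ cS :=
    fun s hs => le_trans (hc₁ s hs) (le_max_left _ _)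
  have hS₂b : ∀ s ∈ Set.Icc (0:ℝ) T, ‖S₂ s‖ ≤ cS :=
    fun s hs => le_trans (hc₂ s hs) (le_trans (le_max_left _ _) (le_max_right _ _))
  set cM := 1 + (n:ℝ) * cS * cR with hcMdef
  have hcM0 : 0 ≤ cM := by positivity
  -- inverse facts
  have hinv₁ : ∀ s ∈ Set.Icc (0:ℝ) T,
      (1 + S₁ s * R s) * (1 + S₁ s * R s)⁻¹ = 1 ∧
      (1 + S₁ s * R s)⁻¹ * (1 + S₁ s * R s) = 1 ∧
      ‖(1 + S₁ s * R s)⁻¹‖ ≤ cM := by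
    intro s hs
    obtain ⟨a, b, c⟩ := inv_bound (hpsd₁ s hs) (hR s hs)
    refine ⟨a, b, le_trans c ?_⟩
    rw [hcMdef]
    have h1 := hS₁b s hs
    have h2 := hcR s hs
    have hn : (0:ℝ) ≤ n := Nat.cast_nonneg n
    have : (n:ℝ) * ‖S₁ s‖ * ‖R s‖ ≤ (n:ℝ) * cS * cR :=
      mul_le_mul (mul_le_mul_of_nonneg_left h1 hn) h2 (norm_nonneg _) (by positivity)
    linarith
  have hinv₂ : ∀ s ∈ Set.Icc (0:ℝ) T,
      (1 + S₂ s * R s) * (1 + S₂ s * R s)⁻¹ = 1 ∧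
      (1 + S₂ s * R s)⁻¹ * (1 + S₂ s * R s) = 1 ∧
      ‖(1 + S₂ s * R s)⁻¹‖ ≤ cM := by
    intro s hs
    obtain ⟨a, b, c⟩ := inv_bound (hpsd₂ s hs) (hR s hs)
    refine ⟨a, b, le_trans c ?_⟩
    rw [hcMdef]
    have h1 := hS₂b s hs
    have h2 := hcR s hs
    have hn : (0:ℝ) ≤ n := Nat.cast_nonneg n
    have : (n:ℝ) * ‖S₂ s‖ * ‖R s‖ ≤ (n:ℝ) * cS * cR :=
      mul_le_mul (mul_le_mul_of_nonneg_left h1 hn) h2 (norm_nonneg _) (by positivity)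
    linarith
  -- the derivative expressions
  set F₁ : ℝ → Matrix (Fin n) (Fin n) ℝ := fun s =>
    S₁ s * (A s)ᵀ + A s * S₁ s + S₁ s * Q s * S₁ s - L' s * (N s)⁻¹ * (L' s)ᵀ -
      K s * (1 + S₁ s * R s)⁻¹ * S₁ s * (K s)ᵀ with hF₁def
  set F₂ : ℝ → Matrix (Fin n) (Fin n) ℝ := fun s =>
    S₂ s * (A s)ᵀ + A s * S₂ s + S₂ s * Q s * S₂ s - L' s * (N s)⁻¹ * (L' s)ᵀ -
      K s * (1 + S₂ s * R s)⁻¹ * S₂ s * (K s)ᵀ with hF₂def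
  set C : ℝ := (n:ℝ) * cA + (n:ℝ) * cA + ((n:ℝ) * ((n:ℝ) * cQ) * cS + (n:ℝ) * ((n:ℝ) * cS * cQ))
      + (n:ℝ) * ((n:ℝ) * cK * ((n:ℝ) * cM + (n:ℝ) * ((n:ℝ) * ((n:ℝ) * cM) * cR) * ((n:ℝ) * cM * cS))) * cK
    with hCdef
  have hC0 : 0 ≤ C := by rw [hCdef]; positivity
  -- key pointwise bound
  have hbound : ∀ s ∈ Set.Icc (0:ℝ) T, ‖F₁ s - F₂ s‖ ≤ C * ‖S₁ s - S₂ s‖ := by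
    intro s hs
    obtain ⟨r₁, l₁, b₁⟩ := hinv₁ s hs
    obtain ⟨r₂, l₂, b₂⟩ := hinv₂ s hs
    set M₁ := (1 + S₁ s * R s)⁻¹
    set M₂ := (1 + S₂ s * R s)⁻¹
    set D := S₁ s - S₂ s with hDdef
    have hdiff : F₁ s - F₂ s
        = D * (A s)ᵀ + A s * D + (D * Q s * S₁ s + S₂ s * Q s * D)
          - K s * (M₁ * D - M₁ * D * R s * (M₂ * S₂ s)) * (K s)ᵀ := by
      rw [hF₁def, hF₂def]
      exact riccati_deriv_diff_id (S₁ s) (S₂ s) (A s)ᵀ (A s) (Q s) (R s)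
        (L' s * (N s)⁻¹ * (L' s)ᵀ) (K s) ((K s)ᵀ) M₁ M₂ l₁ r₂
    have hD0 : (0:ℝ) ≤ ‖D‖ := norm_nonneg D
    have t1 : ‖D * (A s)ᵀ‖ ≤ (n:ℝ) * ‖D‖ * cA :=
      mul_norm_le (le_refl _) (hcAt s hs) hcA0
    have t2 : ‖A s * D‖ ≤ (n:ℝ) * cA * ‖D‖ :=
      mul_norm_le (hcA s hs) (le_refl _) hD0
    have t3 : ‖D * Q s * S₁ s‖ ≤ (n:ℝ) * ((n:ℝ) * ‖D‖ * cQ) * cS :=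
      mul_norm_le (mul_norm_le (le_refl _) (hcQ s hs) hcQ0) (hS₁b s hs) hcS0
    have t4 : ‖S₂ s * Q s * D‖ ≤ (n:ℝ) * ((n:ℝ) * cS * cQ) * ‖D‖ :=
      mul_norm_le (mul_norm_le (hS₂b s hs) (hcQ s hs) hcQ0) (le_refl _) hD0
    -- the K-term
    have x1 : ‖M₁ * D‖ ≤ (n:ℝ) * cM * ‖D‖ := mul_norm_le b₁ (le_refl _) hD0
    have x2 : ‖M₁ * D * R s‖ ≤ (n:ℝ) * ((n:ℝ) * cM * ‖D‖) * cR :=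
      mul_norm_le x1 (hcR s hs) hcR0
    have x3 : ‖M₂ * S₂ s‖ ≤ (n:ℝ) * cM * cS := mul_norm_le b₂ (hS₂b s hs) hcS0
    have hx3nn : (0:ℝ) ≤ (n:ℝ) * cM * cS := by positivity
    have x4 : ‖M₁ * D * R s * (M₂ * S₂ s)‖
        ≤ (n:ℝ) * ((n:ℝ) * ((n:ℝ) * cM * ‖D‖) * cR) * ((n:ℝ) * cM * cS) :=
      mul_norm_le x2 x3 hx3nn
    have x5 : ‖M₁ * D - M₁ * D * R s * (M₂ * S₂ s)‖
        ≤ (n:ℝ) * cM * ‖D‖ + (n:ℝ) * ((n:ℝ) * ((n:ℝ) * cM * ‖D‖) * cR) * ((n:ℝ) * cM * cS) := by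
      calc ‖M₁ * D - M₁ * D * R s * (M₂ * S₂ s)‖
          ≤ ‖M₁ * D‖ + ‖M₁ * D * R s * (M₂ * S₂ s)‖ := norm_sub_le _ _
        _ ≤ _ := add_le_add x1 x4
    have hx5nn : (0:ℝ) ≤ (n:ℝ) * cM * ‖D‖
        + (n:ℝ) * ((n:ℝ) * ((n:ℝ) * cM * ‖D‖) * cR) * ((n:ℝ) * cM * cS) := by positivity
    have t5 : ‖K s * (M₁ * D - M₁ * D * R s * (M₂ * S₂ s)) * (K s)ᵀ‖
        ≤ (n:ℝ) * ((n:ℝ) * cK * ((n:ℝ) * cM * ‖D‖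
            + (n:ℝ) * ((n:ℝ) * ((n:ℝ) * cM * ‖D‖) * cR) * ((n:ℝ) * cM * cS))) * cK :=
      mul_norm_le (mul_norm_le (hcK s hs) x5 hx5nn) (hcKt s hs) hcK0
    have hsum : ‖F₁ s - F₂ s‖ ≤ ‖D * (A s)ᵀ‖ + ‖A s * D‖
        + (‖D * Q s * S₁ s‖ + ‖S₂ s * Q s * D‖)
        + ‖K s * (M₁ * D - M₁ * D * R s * (M₂ * S₂ s)) * (K s)ᵀ‖ := by
      rw [hdiff]
      calc ‖D * (A s)ᵀ + A s * D + (D * Q s * S₁ s + S₂ s * Q s * D)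
            - K s * (M₁ * D - M₁ * D * R s * (M₂ * S₂ s)) * (K s)ᵀ‖
          ≤ ‖D * (A s)ᵀ + A s * D + (D * Q s * S₁ s + S₂ s * Q s * D)‖
            + ‖K s * (M₁ * D - M₁ * D * R s * (M₂ * S₂ s)) * (K s)ᵀ‖ := norm_sub_le _ _
        _ ≤ ‖D * (A s)ᵀ + A s * D‖ + ‖D * Q s * S₁ s + S₂ s * Q s * D‖
            + ‖K s * (M₁ * D - M₁ * D * R s * (M₂ * S₂ s)) * (K s)ᵀ‖ := by
            have := norm_add_le (D * (A s)ᵀ + A s * D) (D * Q s * S₁ s + S₂ s * Q s * D)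
            linarith
        _ ≤ _ := by
            have h1 := norm_add_le (D * (A s)ᵀ) (A s * D)
            have h2 := norm_add_le (D * Q s * S₁ s) (S₂ s * Q s * D)
            linarith
    have hring : (n:ℝ) * ‖D‖ * cA + (n:ℝ) * cA * ‖D‖
        + ((n:ℝ) * ((n:ℝ) * ‖D‖ * cQ) * cS + (n:ℝ) * ((n:ℝ) * cS * cQ) * ‖D‖)
        + (n:ℝ) * ((n:ℝ) * cK * ((n:ℝ) * cM * ‖D‖
            + (n:ℝ) * ((n:ℝ) * ((n:ℝ) * cM * ‖D‖) * cR) * ((n:ℝ) * cM * cS))) * cK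
        = C * ‖D‖ := by
      rw [hCdef]; ring
    linarith [t1, t2, t3, t4, t5, hsum]
  -- time reversal and Grönwall
  set g : ℝ → Matrix (Fin n) (Fin n) ℝ := fun t => S₁ (T - t) - S₂ (T - t) with hgdef
  have hmaps : Set.MapsTo (fun t : ℝ => T - t) (Set.Icc 0 T) (Set.Icc 0 T) := by
    intro t ht
    simp only [Set.mem_Icc] at ht ⊢
    exact ⟨by linarith, by linarith⟩
  have hσcont : ContinuousOn (fun t : ℝ => T - t) (Set.Icc 0 T) :=
    (continuous_const.sub continuous_id).continuousOn
  have hgcont : ContinuousOn g (Set.Icc 0 T) :=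
    ((hcont₁.comp hσcont hmaps).sub (hcont₂.comp hσcont hmaps))
  have hgderiv : ∀ t ∈ Set.Ico (0:ℝ) T,
      HasDerivWithinAt g ((-1:ℝ) • F₁ (T - t) - (-1:ℝ) • F₂ (T - t)) (Set.Ici t) t := by
    intro t ht
    have hs' : T - t ∈ Set.Icc (0:ℝ) T := ⟨by linarith [ht.2], by linarith [ht.1]⟩
    have hσ : HasDerivWithinAt (fun t : ℝ => T - t) (-1 : ℝ) (Set.Icc 0 T) t := by
      simpa using ((hasDerivAt_id t).const_sub T).hasDerivWithinAt
        (s := Set.Icc 0 T)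
    have h1 : HasDerivWithinAt (fun u => S₁ (T - u)) ((-1:ℝ) • F₁ (T - t))
        (Set.Icc 0 T) t :=
      HasDerivWithinAt.scomp t (hode₁ (T - t) hs') hσ hmaps
    have h2 : HasDerivWithinAt (fun u => S₂ (T - u)) ((-1:ℝ) • F₂ (T - t))
        (Set.Icc 0 T) t :=
      HasDerivWithinAt.scomp t (hode₂ (T - t) hs') hσ hmaps
    have h3 : HasDerivWithinAt g ((-1:ℝ) • F₁ (T - t) - (-1:ℝ) • F₂ (T - t))
        (Set.Icc 0 T) t := h1.sub h2
    have h4 := h3.mono (Set.Icc_subset_Icc ht.1 (le_refl T))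
    exact h4.mono_of_mem_nhdsWithin (Icc_mem_nhdsGE_of_mem ⟨le_refl t, ht.2⟩)
  have hg0 : ‖g 0‖ ≤ 0 := by
    have : g 0 = 0 := by
      rw [hgdef]; simp only [sub_zero]; rw [hT₁, hT₂, sub_self]
    rw [this, norm_zero]
  have hgb : ∀ t ∈ Set.Ico (0:ℝ) T,
      ‖(-1:ℝ) • F₁ (T - t) - (-1:ℝ) • F₂ (T - t)‖ ≤ C * ‖g t‖ + 0 := by
    intro t ht
    have hs' : T - t ∈ Set.Icc (0:ℝ) T := ⟨by linarith [ht.2], by linarith [ht.1]⟩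
    have hneg : (-1:ℝ) • F₁ (T - t) - (-1:ℝ) • F₂ (T - t) = -(F₁ (T - t) - F₂ (T - t)) := by
      simp [neg_one_smul]; abel
    rw [hneg, norm_neg, add_zero]
    have := hbound (T - t) hs'
    simpa [hgdef] using this
  have hgron := norm_le_gronwallBound_of_norm_deriv_right_le hgcont hgderiv hg0 hgb
  intro s hs
  have hts : T - s ∈ Set.Icc (0:ℝ) T := ⟨by linarith [hs.2], by linarith [hs.1]⟩
  have := hgron (T - s) hts
  rw [gronwallBound_ε0_δ0] at this
  have hg0' : g (T - s) = 0 := by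
    have h := norm_le_zero_iff.mp this
    exact h
  have : S₁ s - S₂ s = 0 := by
    have : T - (T - s) = s := by ring
    rw [hgdef] at hg0'
    simpa [this] using hg0'
  exact sub_eq_zero.mp this
end

section
/- Let F ∈ ℝ^{k×n}, G ∈ ℝ^{n×n} symmetric positive semidefinite, Σ ∈ ℝ^{n×n} symmetric positive semidefinite, φ ∈ ℝⁿ and b ∈ ℝᵏ. The equation F(I+ΣG)⁻¹Σ Fᵀ λ = −(F(I+ΣG)⁻¹φ + b) has a solution λ ∈ ℝᵏ if and only if F(I+ΣG)⁻¹φ + b lies in the range of F(I+ΣG)⁻¹Σ. -/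
open Matrix

lemma range_mul_transpose_aux {k n : ℕ} (A : Matrix (Fin k) (Fin n) ℝ) :
    LinearMap.range (A * Aᵀ).mulVecLin = LinearMap.range A.mulVecLin := by
  have hle : LinearMap.range (A * Aᵀ).mulVecLin ≤ LinearMap.range A.mulVecLin := by
    rw [Matrix.mulVecLin_mul]
    exact LinearMap.range_comp_le_range _ _
  refine Submodule.eq_of_le_of_finrank_le hle ?_
  have h1 : (A * Aᵀ).rank = A.rank := Matrix.rank_self_mul_transpose A
  simpa [Matrix.rank] using h1.ge

open scoped MatrixOrder in
lemma psd_sqrt_aux {n : ℕ} (S : Matrix (Fin n) (Fin n) ℝ) (hS : S.PosSemidef) :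
    ∃ Q : Matrix (Fin n) (Fin n) ℝ, Q.PosSemidef ∧ Q * Q = S :=
  ⟨CFC.sqrt S, (CFC.sqrt_nonneg S).posSemidef, CFC.sqrt_mul_sqrt_self S hS.nonneg⟩

theorem algebraic_equation_solvable_iff (k n : ℕ)
    (F : Matrix (Fin k) (Fin n) ℝ)
    (S G : Matrix (Fin n) (Fin n) ℝ)
    (hS : S.PosSemidef) (hG : G.PosSemidef)
    (φ : Fin n → ℝ) (b : Fin k → ℝ) :
    (∃ l : Fin k → ℝ,
        (F * (1 + S * G)⁻¹ * S * Fᵀ).mulVec l =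
          -((F * (1 + S * G)⁻¹).mulVec φ + b)) ↔
      (F * (1 + S * G)⁻¹).mulVec φ + b ∈
        LinearMap.range (F * (1 + S * G)⁻¹ * S).mulVecLin := by
  obtain ⟨Q, hQps', hQQ'⟩ := psd_sqrt_aux S hS
  have hQps : Q.PosSemidef := hQps'
  have hQH : Qᴴ = Q := hQps.isHermitian
  have hQQ : Q * Q = S := hQQ'
  set R : Matrix (Fin n) (Fin n) ℝ := Q * G * Q with hR
  have hRps : R.PosSemidef := by
    have := hG.mul_mul_conjTranspose_same Q
    rwa [hQH] at this
  have h1R : (1 + R).PosDef := Matrix.PosDef.add_posSemidef Matrix.PosDef.one hRps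
  -- invertibility of 1 + S * G
  have hdet : (1 + S * G).det = (1 + R).det := by
    have : S * G = Q * (Q * G) := by rw [← Matrix.mul_assoc, hQQ]
    rw [this, Matrix.det_one_add_mul_comm, hR, Matrix.mul_assoc]
  have hUnit : IsUnit (1 + S * G) := by
    rw [Matrix.isUnit_iff_isUnit_det, hdet]
    exact h1R.det_pos.ne'.isUnit
  have hRUnit : IsUnit (1 + R) := h1R.isUnit
  haveI := hUnit.invertible
  haveI := hRUnit.invertible
  -- the key identity
  have hkey : (1 + S * G)⁻¹ * S = Q * (1 + R)⁻¹ * Q := by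
    have h2 : (1 + S * G) * (Q * (1 + R)⁻¹ * Q) = S := by
      have h3 : (1 + S * G) * Q = Q * (1 + R) := by
        rw [Matrix.add_mul, Matrix.one_mul, Matrix.mul_add, Matrix.mul_one, hR,
          ← hQQ]
        rw [Matrix.mul_assoc, Matrix.mul_assoc, Matrix.mul_assoc]
      calc (1 + S * G) * (Q * (1 + R)⁻¹ * Q)
          = ((1 + S * G) * Q) * ((1 + R)⁻¹ * Q) := by
            rw [Matrix.mul_assoc, Matrix.mul_assoc]
        _ = Q * ((1 + R) * ((1 + R)⁻¹ * Q)) := by rw [h3, Matrix.mul_assoc]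
        _ = Q * Q := by rw [Matrix.mul_inv_cancel_left_of_invertible]
        _ = S := hQQ
    calc (1 + S * G)⁻¹ * S
        = (1 + S * G)⁻¹ * ((1 + S * G) * (Q * (1 + R)⁻¹ * Q)) := by rw [h2]
      _ = Q * (1 + R)⁻¹ * Q := Matrix.inv_mul_cancel_left_of_invertible _ _
  -- P = (1+SG)⁻¹ S is PSD
  have hPps : ((1 + S * G)⁻¹ * S).PosSemidef := by
    rw [hkey]
    have := (h1R.inv.posSemidef).mul_mul_conjTranspose_same Q
    rwa [hQH] at this
  set P : Matrix (Fin n) (Fin n) ℝ := (1 + S * G)⁻¹ * S with hP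
  obtain ⟨T, hTps', hTT'⟩ := psd_sqrt_aux P hPps
  have hTH : Tᵀ = T := hTps'.isHermitian
  have hTT : T * T = P := hTT'
  have hFP : F * (1 + S * G)⁻¹ * S = F * P := by rw [Matrix.mul_assoc]
  have hFPFt : F * (1 + S * G)⁻¹ * S * Fᵀ = (F * T) * (F * T)ᵀ := by
    rw [hFP, Matrix.transpose_mul, hTH, ← hTT]
    simp only [Matrix.mul_assoc]
  have hrange1 : LinearMap.range (F * (1 + S * G)⁻¹ * S * Fᵀ).mulVecLin =
      LinearMap.range (F * T).mulVecLin := by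
    rw [hFPFt, range_mul_transpose_aux]
  have hrange2 : LinearMap.range (F * (1 + S * G)⁻¹ * S).mulVecLin =
      LinearMap.range (F * T).mulVecLin := by
    rw [hFP]
    refine le_antisymm ?_ ?_
    · have : F * P = (F * T) * T := by rw [Matrix.mul_assoc, hTT]
      rw [this, Matrix.mulVecLin_mul]
      exact LinearMap.range_comp_le_range _ _
    · rw [← range_mul_transpose_aux (F * T), ← hFPFt, hFP, Matrix.mulVecLin_mul]
      exact LinearMap.range_comp_le_range _ _
  constructor
  · rintro ⟨l, hl⟩
    have : -((F * (1 + S * G)⁻¹).mulVec φ + b) ∈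
        LinearMap.range (F * (1 + S * G)⁻¹ * S * Fᵀ).mulVecLin := ⟨l, hl⟩
    rw [hrange1, ← hrange2] at this
    simpa using Submodule.neg_mem _ this
  · intro h
    have : -((F * (1 + S * G)⁻¹).mulVec φ + b) ∈
        LinearMap.range (F * (1 + S * G)⁻¹ * S).mulVecLin := Submodule.neg_mem _ h
    rw [hrange2, ← hrange1] at this
    obtain ⟨l, hl⟩ := this
    exact ⟨l, hl⟩
end
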